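/- arXiv:2411.19569 — 4 statements merged into one kernel-verified Lean document; each statement's English description precedes it below -/
import Mathlib

section
/- For every simple graph G, the chromatic index of G is at most Δ(G) + 1, where Δ(G) is the maximum degree of G. -/
open SimpleGraph

/-- A proper edge coloring: edges of `G` sharing a vertex get different colors. -/
def IsProperEdgeColoring {V : Type*} (G : SimpleGraph V) {t : ℕ} (c : Sym2 V → Fin t) : Prop :=
  ∀ e₁ ∈ G.edgeSet, ∀ e₂ ∈ G.edgeSet, e₁ ≠ e₂ → (∃ v, v ∈ e₁ ∧ v ∈ e₂) → c e₁ ≠ c e₂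

/-- The chromatic index: least number of colors in a proper edge coloring. -/
noncomputable def chromaticIndex {V : Type*} (G : SimpleGraph V) : ℕ :=
  sInf {t | ∃ c : Sym2 V → Fin t, IsProperEdgeColoring G c}

/-- Color `c` is missing at vertex `w` under coloring `α`. -/
def MissingAt {V : Type*} (G : SimpleGraph V) {t : ℕ} (α : Sym2 V → Fin t) (c : Fin t)
    (w : V) : Prop :=
  ∀ e ∈ G.edgeSet, w ∈ e → α e ≠ c

/-- The subgraph `K_α(a,b)` induced by the edges colored `a` or `b`. -/
def bicolored {V : Type*} (G : SimpleGraph V) {t : ℕ} (α : Sym2 V → Fin t) (a b : Fin t) :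
    SimpleGraph V :=
  SimpleGraph.fromEdgeSet {e | e ∈ G.edgeSet ∧ (α e = a ∨ α e = b)}

/-- `β` is obtained from `α` by a single Kempe change: swapping two colors `a`, `b` on a
connected component of the bicolored subgraph `K_α(a,b)`. -/
def IsKempeSwap {V : Type*} (G : SimpleGraph V) {t : ℕ} (α β : Sym2 V → Fin t) : Prop :=
  ∃ a b : Fin t, ∃ C : (bicolored G α a b).ConnectedComponent,
    (∀ e ∈ G.edgeSet, (α e = a ∨ α e = b) →
      (∀ v ∈ e, (bicolored G α a b).connectedComponentMk v = C) →
      ((α e = a ∧ β e = b) ∨ (α e = b ∧ β e = a))) ∧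
    (∀ e : Sym2 V, (e ∉ G.edgeSet ∨ (α e ≠ a ∧ α e ≠ b) ∨
        ∃ v ∈ e, (bicolored G α a b).connectedComponentMk v ≠ C) → β e = α e)

/-- Kempe equivalence: reachability by a sequence of Kempe changes. -/
def KempeEquiv {V : Type*} (G : SimpleGraph V) {t : ℕ} (α β : Sym2 V → Fin t) : Prop :=
  Relation.ReflTransGen (IsKempeSwap G) α β

/-- `G` is chordless: in every cycle, any two nonconsecutive vertices are nonadjacent. -/
def Chordless {V : Type*} (G : SimpleGraph V) : Prop :=
  ∀ n : ℕ, 3 ≤ n → ∀ c : ZMod n → V, Function.Injective c →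
    (∀ i, G.Adj (c i) (c (i + 1))) →
    ∀ i j : ZMod n, j ≠ i → j ≠ i + 1 → i ≠ j + 1 → ¬ G.Adj (c i) (c j)

/-- An `α`-fan at `u`: edges `u x₀, …, u xₚ` with `m i` a color missing at `x i`
and `α (u x_{i+1}) = m i`. -/
structure IsFan {V : Type*} (G : SimpleGraph V) {t : ℕ} (α : Sym2 V → Fin t)
    (u : V) (p : ℕ) (x : ℕ → V) (m : ℕ → Fin t) : Prop where
  adj : ∀ i ≤ p, G.Adj u (x i)
  inj : ∀ i ≤ p, ∀ j ≤ p, x i = x j → i = j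
  missing : ∀ i ≤ p, MissingAt G α (m i) (x i)
  succ : ∀ i < p, α s(u, x (i + 1)) = m i

/-- The coloring `X_u^{-1}(α,v)`: each fan edge `u xᵢ` is recolored with `m i`,
all other edges keep their color. -/
def IsFanRecolor {V : Type*} {t : ℕ} (α : Sym2 V → Fin t)
    (u : V) (p : ℕ) (x : ℕ → V) (m : ℕ → Fin t) (β : Sym2 V → Fin t) : Prop :=
  (∀ i ≤ p, β s(u, x i) = m i) ∧ (∀ e : Sym2 V, (∀ i ≤ p, e ≠ s(u, x i)) → β e = α e)

/-- A cycle fan is saturated if for every `i` the component of `K_α(α(u xᵢ), m_α(u))`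
containing `u` also contains `x_{i-1}` (cyclically). -/
def SaturatedCycleFan {V : Type*} (G : SimpleGraph V) {t : ℕ} (α : Sym2 V → Fin t)
    (u : V) (p : ℕ) (x : ℕ → V) (mu : Fin t) : Prop :=
  ∀ i ≤ p, (bicolored G α (α s(u, x i)) mu).connectedComponentMk u =
    (bicolored G α (α s(u, x i)) mu).connectedComponentMk (x (if i = 0 then p else i - 1))

/-!
Induction on the number of edges. To colour a last edge `uv` with `Δ + 1` colours, grow a fan
`v = x₀, x₁, …, x_k` of neighbours of `u`, where a colour `m i` missing at `x i` is the colour of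
`u x_{i+1}`. If `m k` is missing at `u`, shifting every fan edge `u x_i` to the colour `m i`
colours `uv`. Otherwise `m k` is the colour of some `u y`; if `y` is new the fan grows, and if
`y = x_j`, then for a colour `α` missing at `u` the `α`/`m k`-subgraph has maximum degree two, with
`u`, `x_{j-1}` and `x_k` of degree at most one. These three cannot lie on one path component, so
one of `x_{j-1}`, `x_k` is separated from `u`; swapping `α` and `m k` on its component makes `α`
missing at the end of the fan up to that vertex, and shifting along that fan finishes.
-/

namespace SimpleGraph

variable {V : Type*} {H : SimpleGraph V}

lemma Walk.IsPath.encard_neighborSet_toSubgraph_of_ne {a b w : V} {p : H.Walk a b}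
    (hp : p.IsPath) (hw : w ∈ p.support) (hwa : w ≠ a) (hwb : w ≠ b) :
    (p.toSubgraph.neighborSet w).encard = 2 := by
  obtain ⟨i, rfl, hi⟩ := p.mem_support_iff_exists_getVert.mp hw
  have hi0 : i ≠ 0 := by rintro rfl; exact hwa p.getVert_zero
  have hil : i < p.length := hi.lt_of_ne (by rintro rfl; exact hwb p.getVert_length)
  have hcard := hp.ncard_neighborSet_toSubgraph_internal_eq_two hi0 hil
  rw [← (Set.finite_of_ncard_pos (by omega)).cast_ncard_eq, hcard]
  rfl

lemma Walk.IsPath.neighborSet_toSubgraph_eq {a b w : V} {p : H.Walk a b} (hp : p.IsPath)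
    (hab : a ≠ b) (hH : ∀ w, (H.neighborSet w).encard ≤ 2) (ha : (H.neighborSet a).encard ≤ 1)
    (hb : (H.neighborSet b).encard ≤ 1) (hw : w ∈ p.support) :
    p.toSubgraph.neighborSet w = H.neighborSet w := by
  refine ((Set.finite_of_encard_le_coe (hH w)).subset (Subgraph.neighborSet_subset _ _)
    |>.eq_of_subset_of_encard_le (Subgraph.neighborSet_subset _ _) ?_)
  by_cases hwa : w = a
  · subst hwa
    rwa [hp.neighborSet_toSubgraph_startpoint (Walk.not_nil_of_ne hab), Set.encard_singleton]
  by_cases hwb : w = b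
  · subst hwb
    rwa [hp.neighborSet_toSubgraph_endpoint (Walk.not_nil_of_ne hab), Set.encard_singleton]
  rw [hp.encard_neighborSet_toSubgraph_of_ne hw hwa hwb]
  exact hH w

/-- A path component has at most two ends. -/
theorem not_reachable_of_reachable {a b c : V} (hH : ∀ w, (H.neighborSet w).encard ≤ 2)
    (ha : (H.neighborSet a).encard ≤ 1) (hb : (H.neighborSet b).encard ≤ 1)
    (hc : (H.neighborSet c).encard ≤ 1) (hab : a ≠ b) (hca : c ≠ a) (hcb : c ≠ b)
    (hr : H.Reachable a b) : ¬ H.Reachable a c := by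
  rintro ⟨q⟩
  obtain ⟨p, hp⟩ := hr.exists_isPath
  have hcp : c ∈ p.support := by
    by_contra hcp
    obtain ⟨d, -, hd, hd'⟩ := q.exists_boundary_dart {w | w ∈ p.support} p.start_mem_support hcp
    have hadj : d.snd ∈ p.toSubgraph.neighborSet d.fst := by
      rw [hp.neighborSet_toSubgraph_eq hab hH ha hb hd]
      exact d.adj
    exact hd' ((p.mem_verts_toSubgraph).mp (Subgraph.Adj.snd_mem hadj))
  have h2 := hp.encard_neighborSet_toSubgraph_of_ne hcp hca hcb
  have := (Set.encard_le_encard (Subgraph.neighborSet_subset p.toSubgraph c)).trans hc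
  rw [h2] at this
  exact absurd this (by decide)

end SimpleGraph

section Coloring

variable {V : Type*} {G : SimpleGraph V} {t : ℕ} {c : Sym2 V → Fin t}

lemma IsProperEdgeColoring.injOn_neighborSet (hc : IsProperEdgeColoring G c) (w : V) :
    Set.InjOn (fun y => c s(w, y)) (G.neighborSet w) := by
  intro y hy y' hy' hcy
  by_contra hne
  exact hc _ hy _ hy' (fun h => hne (Sym2.congr_right.mp h))
    ⟨w, Sym2.mem_mk_left _ _, Sym2.mem_mk_left _ _⟩ hcy

lemma exists_missingAt (G : SimpleGraph V) (c : Sym2 V → Fin t) {w : V}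
    (hw : (G.neighborSet w).encard < t) : ∃ γ, MissingAt G c γ w := by
  by_contra! h
  have hsurj : Set.univ ⊆ (fun y => c s(w, y)) '' G.neighborSet w := by
    intro γ _
    obtain ⟨e, he, hwe, rfl⟩ : ∃ e ∈ G.edgeSet, w ∈ e ∧ c e = γ := by
      simpa [MissingAt] using h γ
    obtain ⟨y, rfl⟩ := Sym2.mem_iff_exists.mp hwe
    exact ⟨y, he, rfl⟩
  have := (Set.encard_le_encard hsurj).trans (Set.encard_image_le _ _)
  rw [Set.encard_univ, ENat.card_eq_coe_fintype_card, Fintype.card_fin] at this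
  exact (this.trans_lt hw).false

lemma bicolored_adj {a b : Fin t} {x y : V} :
    (bicolored G c a b).Adj x y ↔ G.Adj x y ∧ (c s(x, y) = a ∨ c s(x, y) = b) := by
  simp only [bicolored, fromEdgeSet_adj, Set.mem_ofPred_eq, mem_edgeSet]
  exact ⟨fun h => h.1, fun h => ⟨h, h.1.ne⟩⟩

lemma bicolored_comm (a b : Fin t) : bicolored G c a b = bicolored G c b a := by
  ext x y
  simp only [bicolored_adj, or_comm]

lemma encard_neighborSet_bicolored_le (hc : IsProperEdgeColoring G c) (a b : Fin t) (w : V) :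
    ((bicolored G c a b).neighborSet w).encard ≤ 2 := by
  have hinj : Set.InjOn (fun y => c s(w, y)) ((bicolored G c a b).neighborSet w) :=
    (hc.injOn_neighborSet w).mono fun y hy => (bicolored_adj.mp hy).1
  refine (Set.encard_le_encard_of_injOn (t := {a, b}) (fun y hy => ?_) hinj).trans ?_
  · exact (bicolored_adj.mp hy).2
  · exact (Set.encard_insert_le _ _).trans (by rw [Set.encard_singleton]; rfl)

lemma MissingAt.encard_neighborSet_bicolored_le (hc : IsProperEdgeColoring G c) {a b : Fin t}
    {w : V} (ha : MissingAt G c a w) : ((bicolored G c a b).neighborSet w).encard ≤ 1 := by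
  have hinj : Set.InjOn (fun y => c s(w, y)) ((bicolored G c a b).neighborSet w) :=
    (hc.injOn_neighborSet w).mono fun y hy => (bicolored_adj.mp hy).1
  refine (Set.encard_le_encard_of_injOn (t := {b}) (fun y hy => ?_) hinj).trans
    (Set.encard_singleton b).le
  obtain ⟨hadj, hcol⟩ := bicolored_adj.mp hy
  exact hcol.resolve_left (ha _ hadj (Sym2.mem_mk_left _ _))

end Coloring

section KempeSwap

variable {V : Type*} {G : SimpleGraph V} {t : ℕ} {c : Sym2 V → Fin t} {a b : Fin t} {z : V}

def IsKempeEdge (G : SimpleGraph V) (c : Sym2 V → Fin t) (a b : Fin t) (z : V) (e : Sym2 V) :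
    Prop :=
  e ∈ G.edgeSet ∧ (c e = a ∨ c e = b) ∧ ∀ w ∈ e, (bicolored G c a b).Reachable z w

open Classical in
noncomputable def kempeSwap (G : SimpleGraph V) (c : Sym2 V → Fin t) (a b : Fin t) (z : V) :
    Sym2 V → Fin t :=
  fun e => if IsKempeEdge G c a b z e then Equiv.swap a b (c e) else c e

lemma kempeSwap_apply_of_isKempeEdge {e : Sym2 V} (he : IsKempeEdge G c a b z e) :
    kempeSwap G c a b z e = Equiv.swap a b (c e) := if_pos he

lemma kempeSwap_apply_of_not_isKempeEdge {e : Sym2 V} (he : ¬ IsKempeEdge G c a b z e) :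
    kempeSwap G c a b z e = c e := if_neg he

lemma kempeSwap_apply_of_not_reachable {e : Sym2 V} {w : V} (hw : w ∈ e)
    (hr : ¬ (bicolored G c a b).Reachable z w) : kempeSwap G c a b z e = c e :=
  kempeSwap_apply_of_not_isKempeEdge fun he => hr (he.2.2 w hw)

lemma reachable_bicolored_of_mem {e : Sym2 V} (he : e ∈ G.edgeSet) (hc : c e = a ∨ c e = b)
    {w w' : V} (hw : w ∈ e) (hw' : w' ∈ e) : (bicolored G c a b).Reachable w w' := by
  obtain ⟨y, rfl⟩ := Sym2.mem_iff_exists.mp hw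
  rcases Sym2.mem_iff.mp hw' with rfl | rfl
  · rfl
  · exact (bicolored_adj.mpr ⟨he, hc⟩).reachable

lemma IsKempeEdge.of_mem {e e' : Sym2 V} (he : IsKempeEdge G c a b z e) (he' : e' ∈ G.edgeSet)
    (hc : c e' = a ∨ c e' = b) {w : V} (hw : w ∈ e) (hw' : w ∈ e') :
    IsKempeEdge G c a b z e' :=
  ⟨he', hc, fun _ hw'' => (he.2.2 w hw).trans (reachable_bicolored_of_mem he' hc hw' hw'')⟩

lemma kempeSwap_ne_of_isKempeEdge {e e' : Sym2 V} (he : IsKempeEdge G c a b z e)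
    (he' : e' ∈ G.edgeSet) (hne' : ¬ IsKempeEdge G c a b z e') {w : V} (hw : w ∈ e)
    (hw' : w ∈ e') : kempeSwap G c a b z e ≠ kempeSwap G c a b z e' := by
  rw [kempeSwap_apply_of_isKempeEdge he, kempeSwap_apply_of_not_isKempeEdge hne']
  intro h
  refine hne' (he.of_mem he' ?_ hw hw')
  rcases he.2.1 with h' | h'
  · rw [h', Equiv.swap_apply_left] at h
    exact Or.inr h.symm
  · rw [h', Equiv.swap_apply_right] at h
    exact Or.inl h.symm

lemma IsProperEdgeColoring.kempeSwap (hc : IsProperEdgeColoring G c) (a b : Fin t) (z : V) :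
    IsProperEdgeColoring G (kempeSwap G c a b z) := by
  intro e₁ he₁ e₂ he₂ hne ⟨w, hw₁, hw₂⟩
  by_cases h₁ : IsKempeEdge G c a b z e₁ <;> by_cases h₂ : IsKempeEdge G c a b z e₂
  · rw [kempeSwap_apply_of_isKempeEdge h₁, kempeSwap_apply_of_isKempeEdge h₂,
      (Equiv.swap a b).injective.ne_iff]
    exact hc e₁ he₁ e₂ he₂ hne ⟨w, hw₁, hw₂⟩
  · exact kempeSwap_ne_of_isKempeEdge h₁ he₂ h₂ hw₁ hw₂
  · exact (kempeSwap_ne_of_isKempeEdge h₂ he₁ h₁ hw₂ hw₁).symm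
  · rw [kempeSwap_apply_of_not_isKempeEdge h₁, kempeSwap_apply_of_not_isKempeEdge h₂]
    exact hc e₁ he₁ e₂ he₂ hne ⟨w, hw₁, hw₂⟩

lemma MissingAt.kempeSwap_of_ne {γ : Fin t} {w : V} (hγ : MissingAt G c γ w) (ha : γ ≠ a)
    (hb : γ ≠ b) : MissingAt G (kempeSwap G c a b z) γ w := by
  intro e he hwe h
  by_cases hk : IsKempeEdge G c a b z e
  · rw [kempeSwap_apply_of_isKempeEdge hk, Equiv.swap_apply_eq_iff,
      Equiv.swap_apply_of_ne_of_ne ha hb] at h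
    exact hγ e he hwe h
  · rw [kempeSwap_apply_of_not_isKempeEdge hk] at h
    exact hγ e he hwe h

lemma MissingAt.kempeSwap_of_not_reachable {γ : Fin t} {w : V} (hγ : MissingAt G c γ w)
    (hr : ¬ (bicolored G c a b).Reachable z w) : MissingAt G (kempeSwap G c a b z) γ w :=
  fun e he hwe => by
    rw [kempeSwap_apply_of_not_reachable hwe hr]
    exact hγ e he hwe

lemma MissingAt.kempeSwap_self (hb : MissingAt G c b z) :
    MissingAt G (kempeSwap G c a b z) a z := by
  intro e he hze h
  by_cases hk : IsKempeEdge G c a b z e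
  · rw [kempeSwap_apply_of_isKempeEdge hk, Equiv.swap_apply_eq_iff, Equiv.swap_apply_left] at h
    exact hb e he hze h
  · rw [kempeSwap_apply_of_not_isKempeEdge hk] at h
    exact hk ⟨he, Or.inl h, fun _ hw => reachable_bicolored_of_mem he (Or.inl h) hze hw⟩

end KempeSwap

section Fan

variable {V : Type*} {G : SimpleGraph V} {t : ℕ} {c : Sym2 V → Fin t} {u v : V} {k : ℕ}
  {x : ℕ → V} {m : ℕ → Fin t}

/-- `c` colours `G - uv`, and the fan starts with the uncoloured edge `u x₀ = uv`. -/
structure IsVizingFan (G : SimpleGraph V) (c : Sym2 V → Fin t) (u v : V) (k : ℕ) (x : ℕ → V)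
    (m : ℕ → Fin t) : Prop where
  zero : x 0 = v
  adj : ∀ i ≤ k, G.Adj u (x i)
  injOn : Set.InjOn x (Set.Iic k)
  missing : ∀ i ≤ k, MissingAt (G.deleteEdges {s(u, v)}) c (m i) (x i)
  succ : ∀ i < k, c s(u, x (i + 1)) = m i

lemma exists_isFanRecolor (c : Sym2 V → Fin t) (u : V) (hx : Set.InjOn x (Set.Iic k))
    (m : ℕ → Fin t) : ∃ β, IsFanRecolor c u k x m β := by
  classical
  refine ⟨fun e => if h : ∃ i ≤ k, e = s(u, x i) then m h.choose else c e,
    fun i hi => ?_, fun e he => dif_neg ?_⟩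
  · have h : ∃ j ≤ k, s(u, x i) = s(u, x j) := ⟨i, hi, rfl⟩
    obtain ⟨hj, hij⟩ := h.choose_spec
    dsimp only
    rw [dif_pos h]
    exact congrArg m (hx (Set.mem_Iic.mpr hi) (Set.mem_Iic.mpr hj) (Sym2.congr_right.mp hij)).symm
  · rintro ⟨i, hi, rfl⟩
    exact he i hi rfl

namespace IsVizingFan

variable (hF : IsVizingFan G c u v k x m)
include hF

lemma adj_deleteEdges {i : ℕ} (hi0 : i ≠ 0) (hik : i ≤ k) :
    (G.deleteEdges {s(u, v)}).Adj u (x i) := by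
  refine (deleteEdges_adj ..).mpr ⟨hF.adj i hik, fun h => hi0 (hF.injOn ?_ ?_ ?_)⟩
  · exact Set.mem_Iic.mpr hik
  · exact Set.mem_Iic.mpr (Nat.zero_le k)
  · rw [hF.zero]
    exact Sym2.congr_right.mp h

lemma mono {l : ℕ} (hl : l ≤ k) : IsVizingFan G c u v l x m where
  zero := hF.zero
  adj i hi := hF.adj i (hi.trans hl)
  injOn := hF.injOn.mono (Set.Iic_subset_Iic.mpr hl)
  missing i hi := hF.missing i (hi.trans hl)
  succ i hi := hF.succ i (hi.trans_le hl)

lemma lt_card [Finite V] : k < Nat.card V := by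
  have hinj : Function.Injective fun i : Fin (k + 1) => x i := fun i j hij =>
    Fin.ext (hF.injOn (Set.mem_Iic.mpr (Nat.lt_succ_iff.mp i.2))
      (Set.mem_Iic.mpr (Nat.lt_succ_iff.mp j.2)) hij)
  simpa using Nat.card_le_card_of_injective _ hinj

lemma eq_succ_of_color_eq (hc : IsProperEdgeColoring (G.deleteEdges {s(u, v)}) c) {i : ℕ}
    (hi : i < k) {y : V} (hy : (G.deleteEdges {s(u, v)}).Adj u y) (hcy : c s(u, y) = m i) :
    y = x (i + 1) :=
  hc.injOn_neighborSet u hy (hF.adj_deleteEdges i.succ_ne_zero hi) (hcy.trans (hF.succ i hi).symm)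

lemma eq_of_color_eq (hc : IsProperEdgeColoring (G.deleteEdges {s(u, v)}) c) {i j : ℕ}
    (hi : i < k) (hj : j < k) (h : m i = m j) : i = j := by
  have hx := hF.eq_succ_of_color_eq hc hj (hF.adj_deleteEdges i.succ_ne_zero hi)
    ((hF.succ i hi).trans h)
  have := hF.injOn (Set.mem_Iic.mpr hi) (Set.mem_Iic.mpr hj) hx
  omega

lemma color_ne_of_missingAt {γ : Fin t} (hγ : MissingAt (G.deleteEdges {s(u, v)}) c γ u)
    {i : ℕ} (hi : i < k) : m i ≠ γ := by
  rw [← hF.succ i hi]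
  exact hγ _ (hF.adj_deleteEdges i.succ_ne_zero hi) (Sym2.mem_mk_left _ _)

lemma injOn_color (hc : IsProperEdgeColoring (G.deleteEdges {s(u, v)}) c)
    (hu : MissingAt (G.deleteEdges {s(u, v)}) c (m k) u) : Set.InjOn m (Set.Iic k) := by
  have key : ∀ i j, i < j → j ≤ k → m i ≠ m j := by
    intro i j hij hjk h
    obtain rfl | hjk := hjk.eq_or_lt
    · exact hF.color_ne_of_missingAt hu hij h
    · exact hij.ne (hF.eq_of_color_eq hc (hij.trans hjk) hjk h)
  intro i hi j hj h
  rcases lt_trichotomy i j with hij | rfl | hij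
  · exact absurd h (key i j hij hj)
  · rfl
  · exact absurd h.symm (key j i hij hi)

lemma extend {y : V} {γ : Fin t} (hy : ∀ i ≤ k, x i ≠ y)
    (huy : (G.deleteEdges {s(u, v)}).Adj u y)
    (hγ : MissingAt (G.deleteEdges {s(u, v)}) c γ y) (hcy : c s(u, y) = m k) :
    IsVizingFan G c u v (k + 1) (Function.update x (k + 1) y) (Function.update m (k + 1) γ) where
  zero := by
    rw [Function.update_of_ne (Nat.succ_ne_zero k).symm]
    exact hF.zero
  adj i hi := by
    obtain rfl | hi := hi.eq_or_lt
    · rw [Function.update_self]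
      exact huy.1
    · rw [Function.update_of_ne hi.ne]
      exact hF.adj i (Nat.lt_succ_iff.mp hi)
  injOn i hi j hj h := by
    simp only [Set.mem_Iic] at hi hj
    rcases hi.eq_or_lt with rfl | hi <;> rcases hj.eq_or_lt with rfl | hj
    · rfl
    · rw [Function.update_self, Function.update_of_ne hj.ne] at h
      exact absurd h.symm (hy j (Nat.lt_succ_iff.mp hj))
    · rw [Function.update_self, Function.update_of_ne hi.ne] at h
      exact absurd h (hy i (Nat.lt_succ_iff.mp hi))
    · rw [Function.update_of_ne hi.ne, Function.update_of_ne hj.ne] at h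
      exact hF.injOn (Set.mem_Iic.mpr (Nat.lt_succ_iff.mp hi))
        (Set.mem_Iic.mpr (Nat.lt_succ_iff.mp hj)) h
  missing i hi := by
    obtain rfl | hi := hi.eq_or_lt
    · rw [Function.update_self, Function.update_self]
      exact hγ
    · rw [Function.update_of_ne hi.ne, Function.update_of_ne hi.ne]
      exact hF.missing i (Nat.lt_succ_iff.mp hi)
  succ i hi := by
    rw [Function.update_of_ne hi.ne]
    obtain rfl | hik := (Nat.lt_succ_iff.mp hi).eq_or_lt
    · rw [Function.update_self]
      exact hcy
    · rw [Function.update_of_ne (by omega : i + 1 ≠ k + 1)]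
      exact hF.succ i hik

lemma isProperEdgeColoring_of_isFanRecolor
    (hc : IsProperEdgeColoring (G.deleteEdges {s(u, v)}) c)
    (hu : MissingAt (G.deleteEdges {s(u, v)}) c (m k) u) {β : Sym2 V → Fin t}
    (hβ : IsFanRecolor c u k x m β) : IsProperEdgeColoring G β := by
  have hG' : ∀ e ∈ G.edgeSet, (∀ i ≤ k, e ≠ s(u, x i)) → e ∈ (G.deleteEdges {s(u, v)}).edgeSet :=
    fun e he hne => by
      rw [edgeSet_deleteEdges]
      exact ⟨he, fun h => hne 0 (Nat.zero_le k) (by rw [hF.zero]; exact h)⟩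
  have hmixed : ∀ i ≤ k, ∀ e ∈ G.edgeSet, (∀ j ≤ k, e ≠ s(u, x j)) →
      ∀ w ∈ s(u, x i), w ∈ e → β e ≠ m i := by
    intro i hi e he hne w hw hwe
    rw [hβ.2 e hne]
    have he' := hG' e he hne
    rcases Sym2.mem_iff.mp hw with rfl | rfl
    · obtain ⟨y, rfl⟩ := Sym2.mem_iff_exists.mp hwe
      obtain rfl | hik := hi.eq_or_lt
      · exact hu _ he' (Sym2.mem_mk_left _ _)
      · exact fun h => hne (i + 1) hik (congrArg _ (hF.eq_succ_of_color_eq hc hik he' h))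
    · exact hF.missing i hi e he' hwe
  intro e₁ he₁ e₂ he₂ hne ⟨w, hw₁, hw₂⟩
  by_cases h₁ : ∀ i ≤ k, e₁ ≠ s(u, x i) <;> by_cases h₂ : ∀ i ≤ k, e₂ ≠ s(u, x i)
  · rw [hβ.2 e₁ h₁, hβ.2 e₂ h₂]
    exact hc _ (hG' e₁ he₁ h₁) _ (hG' e₂ he₂ h₂) hne ⟨w, hw₁, hw₂⟩
  · push Not at h₂
    obtain ⟨j, hj, rfl⟩ := h₂
    rw [hβ.1 j hj]
    exact hmixed j hj e₁ he₁ h₁ w hw₂ hw₁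
  · push Not at h₁
    obtain ⟨i, hi, rfl⟩ := h₁
    rw [hβ.1 i hi]
    exact (hmixed i hi e₂ he₂ h₂ w hw₁ hw₂).symm
  · push Not at h₁ h₂
    obtain ⟨i, hi, rfl⟩ := h₁
    obtain ⟨j, hj, rfl⟩ := h₂
    rw [hβ.1 i hi, hβ.1 j hj]
    exact fun h => hne (by rw [hF.injOn_color hc hu (Set.mem_Iic.mpr hi) (Set.mem_Iic.mpr hj) h])

lemma exists_isProperEdgeColoring_of_missingAt
    (hc : IsProperEdgeColoring (G.deleteEdges {s(u, v)}) c)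
    (hu : MissingAt (G.deleteEdges {s(u, v)}) c (m k) u) :
    ∃ β : Sym2 V → Fin t, IsProperEdgeColoring G β :=
  let ⟨β, hβ⟩ := exists_isFanRecolor c u hF.injOn m
  ⟨β, hF.isProperEdgeColoring_of_isFanRecolor hc hu hβ⟩

lemma exists_isProperEdgeColoring_of_kempeSwap
    (hc : IsProperEdgeColoring (G.deleteEdges {s(u, v)}) c) {α : Fin t}
    (hα : MissingAt (G.deleteEdges {s(u, v)}) c α u)
    (hu : ¬ (bicolored (G.deleteEdges {s(u, v)}) c α (m k)).Reachable (x k) u)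
    (hx : ∀ i < k, m i = m k →
      ¬ (bicolored (G.deleteEdges {s(u, v)}) c α (m k)).Reachable (x k) (x i)) :
    ∃ β : Sym2 V → Fin t, IsProperEdgeColoring G β := by
  have hF' : IsVizingFan G (kempeSwap (G.deleteEdges {s(u, v)}) c α (m k) (x k)) u v k x
      (Function.update m k α) :=
    { zero := hF.zero
      adj := hF.adj
      injOn := hF.injOn
      missing := fun i hi => by
        obtain rfl | hik := hi.eq_or_lt
        · rw [Function.update_self]
          exact (hF.missing i hi).kempeSwap_self
        rw [Function.update_of_ne hik.ne]
        by_cases hmi : m i = m k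
        · exact (hF.missing i hi).kempeSwap_of_not_reachable (hx i hik hmi)
        · exact (hF.missing i hi).kempeSwap_of_ne (hF.color_ne_of_missingAt hα hik) hmi
      succ := fun i hi => by
        rw [Function.update_of_ne hi.ne,
          kempeSwap_apply_of_not_reachable (Sym2.mem_mk_left _ _) hu]
        exact hF.succ i hi }
  refine hF'.exists_isProperEdgeColoring_of_missingAt (hc.kempeSwap _ _ _) ?_
  rw [Function.update_self]
  exact hα.kempeSwap_of_not_reachable hu

lemma exists_isProperEdgeColoring_of_color_eq
    (hc : IsProperEdgeColoring (G.deleteEdges {s(u, v)}) c) {α : Fin t}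
    (hα : MissingAt (G.deleteEdges {s(u, v)}) c α u) {j : ℕ} (hj0 : j ≠ 0) (hjk : j ≤ k)
    (hcj : c s(u, x j) = m k) : ∃ β : Sym2 V → Fin t, IsProperEdgeColoring G β := by
  set H := bicolored (G.deleteEdges {s(u, v)}) c α (m k)
  have hj : j - 1 < k := by omega
  have hmj : m (j - 1) = m k := by
    rw [← hF.succ (j - 1) hj, Nat.sub_add_cancel (Nat.one_le_iff_ne_zero.mpr hj0), hcj]
  have hdeg := encard_neighborSet_bicolored_le hc α (m k)
  have hdu : (H.neighborSet u).encard ≤ 1 := hα.encard_neighborSet_bicolored_le hc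
  have hdx : ∀ i ≤ k, m i = m k → (H.neighborSet (x i)).encard ≤ 1 := fun i hi hmi => by
    rw [show H = bicolored _ c (m k) α from bicolored_comm _ _]
    exact (hmi ▸ hF.missing i hi).encard_neighborSet_bicolored_le hc
  have hxu : ∀ i ≤ k, x i ≠ u := fun i hi => (hF.adj i hi).ne.symm
  have hxx : x (j - 1) ≠ x k := fun h => hj.ne
    (hF.injOn (Set.mem_Iic.mpr hj.le) (Set.mem_Iic.mpr le_rfl) h)
  by_cases hr : H.Reachable u (x (j - 1))
  · have hnr : ¬ H.Reachable u (x k) := not_reachable_of_reachable hdeg hdu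
      (hdx _ hj.le hmj) (hdx k le_rfl rfl) (hxu _ hj.le).symm (hxu k le_rfl) hxx.symm hr
    refine hF.exists_isProperEdgeColoring_of_kempeSwap hc hα (fun h => hnr h.symm) ?_
    intro i hi hmi hri
    rw [hF.eq_of_color_eq hc hi hj (hmi.trans hmj.symm)] at hri
    exact hnr (hr.trans hri.symm)
  · refine (hF.mono hj.le).exists_isProperEdgeColoring_of_kempeSwap hc hα ?_ ?_ <;> rw [hmj]
    · exact fun h => hr h.symm
    · intro i hi hmi
      exact absurd (hF.eq_of_color_eq hc (hi.trans hj) hj (hmi.trans hmj.symm)) hi.ne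

end IsVizingFan

theorem IsVizingFan.exists_isProperEdgeColoring [Finite V] {k : ℕ} {x : ℕ → V} {m : ℕ → Fin t}
    (hF : IsVizingFan G c u v k x m) (hc : IsProperEdgeColoring (G.deleteEdges {s(u, v)}) c)
    (hdeg : ∀ w, ((G.deleteEdges {s(u, v)}).neighborSet w).encard < t) :
    ∃ β : Sym2 V → Fin t, IsProperEdgeColoring G β := by
  by_cases hu : MissingAt (G.deleteEdges {s(u, v)}) c (m k) u
  · exact hF.exists_isProperEdgeColoring_of_missingAt hc hu
  unfold MissingAt at hu
  push Not at hu
  obtain ⟨e, he, hue, hce⟩ := hu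
  obtain ⟨y, rfl⟩ := Sym2.mem_iff_exists.mp hue
  by_cases hy : ∃ j ≤ k, x j = y
  · obtain ⟨j, hjk, rfl⟩ := hy
    obtain ⟨α, hα⟩ := exists_missingAt _ c (hdeg u)
    refine hF.exists_isProperEdgeColoring_of_color_eq hc hα ?_ hjk hce
    rintro rfl
    exact ((deleteEdges_adj ..).mp he).2 (by rw [hF.zero]; rfl)
  · push Not at hy
    obtain ⟨γ, hγ⟩ := exists_missingAt _ c (hdeg y)
    exact (hF.extend hy he hγ hce).exists_isProperEdgeColoring hc hdeg
termination_by Nat.card V - k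
decreasing_by
  have := hF.lt_card
  omega

end Fan

section Vizing

variable {V : Type*} [Finite V] {G : SimpleGraph V} {t : ℕ}

theorem exists_isProperEdgeColoring_of_deleteEdges {u v : V} (huv : G.Adj u v)
    {c : Sym2 V → Fin t} (hc : IsProperEdgeColoring (G.deleteEdges {s(u, v)}) c)
    (hdeg : ∀ w, ((G.deleteEdges {s(u, v)}).neighborSet w).encard < t) :
    ∃ β : Sym2 V → Fin t, IsProperEdgeColoring G β := by
  obtain ⟨γ, hγ⟩ := exists_missingAt _ c (hdeg v)
  have hF : IsVizingFan G c u v 0 (fun _ => v) (fun _ => γ) :=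
    ⟨rfl, fun _ _ => huv, fun i hi j hj _ => by simp_all, fun _ _ => hγ,
      fun i hi => absurd hi i.not_lt_zero⟩
  exact hF.exists_isProperEdgeColoring hc hdeg

theorem exists_isProperEdgeColoring_of_encard_neighborSet_le (D : ℕ)
    (hdeg : ∀ w, (G.neighborSet w).encard ≤ D) :
    ∃ c : Sym2 V → Fin (D + 1), IsProperEdgeColoring G c := by
  induction hn : G.edgeSet.ncard using Nat.strong_induction_on generalizing G with
  | _ n ih =>
  obtain hE | ⟨e, he⟩ := G.edgeSet.eq_empty_or_nonempty
  · exact ⟨fun _ => 0, fun e he => by simp [hE] at he⟩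
  induction e using Sym2.ind with | _ u v => ?_
  have hdeg' : ∀ w, ((G.deleteEdges {s(u, v)}).neighborSet w).encard ≤ D := fun w =>
    (Set.encard_le_encard fun y hy => ((deleteEdges_adj ..).mp hy).1).trans (hdeg w)
  have hlt : (G.deleteEdges {s(u, v)}).edgeSet.ncard < n := by
    rw [← hn, edgeSet_deleteEdges]
    exact Set.ncard_sdiff_singleton_lt_of_mem he
  obtain ⟨c, hc⟩ := ih _ hlt hdeg' rfl
  exact exists_isProperEdgeColoring_of_deleteEdges he hc fun w =>
    (hdeg' w).trans_lt (by exact_mod_cast D.lt_succ_self)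

end Vizing

/-- Vizing's theorem: `χ'(G) ≤ Δ(G) + 1` for every simple graph. -/
theorem stmt0 {V : Type*} [Fintype V] (G : SimpleGraph V) [DecidableRel G.Adj] :
    chromaticIndex G ≤ G.maxDegree + 1 := by
  obtain ⟨c, hc⟩ := exists_isProperEdgeColoring_of_encard_neighborSet_le G.maxDegree fun w => by
    rw [← G.coe_neighborFinset w, Set.encard_coe_eq_coe_finsetCard, card_neighborFinset_eq_degree]
    exact_mod_cast G.degree_le_maxDegree w
  exact Nat.sInf_le ⟨c, hc⟩
end

section
/- A 2-connected simple graph G is minimally 2-connected (i.e., for every edge e, G − e is not 2-connected) if and only if G is chordless, meaning no cycle of G has a chord (an edge joining two nonconsecutive vertices of the cycle). -/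
open SimpleGraph

/-- `G` is 2-connected: at least 3 vertices and deleting any vertex leaves it connected. -/
def TwoConnected {V : Type*} [Fintype V] (G : SimpleGraph V) : Prop :=
  3 ≤ Fintype.card V ∧ ∀ v : V, (G.induce {u | u ≠ v}).Connected
/-!
If a cycle `c` has a chord `xy`, then `G - xy` is still 2-connected: `c` does not use `xy`, and
for every vertex `v` the cycle minus `v` still joins `x` and `y` in `G - xy - v`.

Conversely, if `G - xy` is 2-connected then, by Whitney's argument, `x` and `y` lie on a common
cycle of `G - xy`; as `x` and `y` are not adjacent in `G - xy`, the edge `xy` is a chord of it.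
-/

namespace SimpleGraph

variable {V : Type*} {G : SimpleGraph V}

theorem Connected.of_adj_imp_reachable {H : SimpleGraph V} (hG : G.Connected)
    (h : ∀ ⦃a b⦄, G.Adj a b → H.Reachable a b) : H.Connected := by
  have : Nonempty V := hG.nonempty
  refine ⟨fun a b => ?_⟩
  obtain ⟨p⟩ := hG.preconnected a b
  induction p with
  | nil => exact Reachable.refl _
  | cons hab _ ih => exact (h hab).trans ih

theorem reachable_induce_ne_iff {v a b : V} (ha : a ≠ v) (hb : b ≠ v) :
    (G.induce {u | u ≠ v}).Reachable ⟨a, ha⟩ ⟨b, hb⟩ ↔ ∃ p : G.Walk a b, v ∉ p.support := by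
  constructor
  · rintro ⟨q⟩
    have hq : v ∉ (q.map (Embedding.induce {u | u ≠ v}).toHom).support := by
      rw [Walk.support_map]
      simp
    exact ⟨_, hq⟩
  · rintro ⟨p, hp⟩
    exact ⟨p.induce _ fun u hu (huv : u = v) => hp (huv ▸ hu)⟩

namespace Walk

theorem getVert_mod_length {u : V} (C : G.Walk u u) {i : ℕ} (hi : i ≤ C.length) :
    C.getVert (i % C.length) = C.getVert i := by
  rcases hi.lt_or_eq with hi | rfl
  · rw [Nat.mod_eq_of_lt hi]
  · rw [Nat.mod_self, getVert_zero, getVert_length]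

theorem exists_isPath_to_first_mem (S : Set V) {u v : V} (P : G.Walk u v) (hv : v ∈ S) :
    ∃ z ∈ S, ∃ Q : G.Walk u z, Q.IsPath ∧ Q.support ⊆ P.support ∧
      ∀ a ∈ Q.support, a ∈ S → a = z := by
  classical
  induction P with
  | nil => exact ⟨_, hv, nil, .nil, by simp, by simp⟩
  | @cons u u' w h P ih =>
    by_cases hu : u ∈ S
    · exact ⟨u, hu, nil, .nil, by simp, by simp⟩
    obtain ⟨z, hz, Q, -, hQP, hQ⟩ := ih hv
    have hsub : (cons h Q).bypass.support ⊆ u :: Q.support := support_bypass_subset_support _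
    refine ⟨z, hz, (cons h Q).bypass, bypass_isPath _, fun a ha => ?_, fun a ha haS => ?_⟩
    · rcases List.mem_cons.mp (hsub ha) with rfl | ha
      · exact start_mem_support _
      · exact List.mem_cons_of_mem _ (hQP ha)
    · rcases List.mem_cons.mp (hsub ha) with rfl | ha
      · exact absurd haS hu
      · exact hQ a ha haS

theorem IsCycle.exists_isPath_mem_support {u w x₀ x : V} {C : G.Walk u u} (hC : C.IsCycle)
    (hw : w ∈ C.support) (hx₀ : x₀ ∈ C.support) (hx₀w : x₀ ≠ w) (hx : x ∈ C.support) :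
    ∃ T : G.Walk w x₀, T.IsPath ∧ T.support ⊆ C.support ∧ x ∈ T.support := by
  classical
  have hR := hC.rotate hw
  have hRC : ∀ a ∈ (C.rotate w hw).support, a ∈ C.support := fun a => (mem_support_rotate_iff ..).mp
  have hx₀R := (C.mem_support_rotate_iff w hw).mpr hx₀
  have hxR := (C.mem_support_rotate_iff w hw).mpr hx
  rw [← (C.rotate w hw).take_spec hx₀R] at hR
  rw [← (C.rotate w hw).take_spec hx₀R, mem_support_append_iff] at hxR
  rcases hxR with hxT | hxD
  · exact ⟨_, hR.isPath_of_append_left (not_nil_of_ne hx₀w),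
      fun a ha => hRC a (support_takeUntil_subset_support _ _ ha), hxT⟩
  · refine ⟨_, (hR.isPath_of_append_right (not_nil_of_ne hx₀w.symm)).reverse,
      fun a ha => hRC a (support_dropUntil_subset_support _ hx₀R (by simpa using ha)),
      by simpa using hxD⟩

theorem isCycle_cons_append_reverse {w x₀ y : V} {T : G.Walk w x₀} {Q : G.Walk y x₀}
    (hT : T.IsPath) (hQ : Q.IsPath) (hyw : G.Adj y w) (hwx₀ : w ≠ x₀) (hyT : y ∉ T.support)
    (hQT : ∀ a ∈ Q.support, a ∈ T.support → a = x₀) :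
    ((cons hyw T).append Q.reverse).IsCycle := by
  refine (hT.cons hyT).isCycle_append hQ.reverse (fun a haT haQ => ?_) (Or.inl ?_)
  · have hnd := hQ.reverse.support_nodup
    rw [← cons_tail_support, List.nodup_cons] at hnd
    have := hQT a (by simpa using List.mem_of_mem_tail haQ) (by simpa using haT)
    exact hnd.1 (this ▸ haQ)
  · have : T.length ≠ 0 := fun h => hwx₀ (eq_of_length_eq_zero h)
    simp only [length_cons]
    omega

end Walk

section CyclicSequence

variable {n : ℕ} {c : ZMod n → V}

theorem exists_walk_add_natCast (hc : ∀ k, G.Adj (c k) (c (k + 1))) {v : V} (a : ZMod n) :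
    ∀ t : ℕ, (∀ s ≤ t, c (a + s) ≠ v) → ∃ p : G.Walk (c a) (c (a + t)), v ∉ p.support
  | 0, h => by
    have h0 := h 0 le_rfl
    rw [Nat.cast_zero, add_zero] at h0 ⊢
    exact ⟨.nil, by simpa using h0.symm⟩
  | t + 1, h => by
    obtain ⟨p, hp⟩ := exists_walk_add_natCast hc a t fun s hs => h s (by omega)
    have hlast := h (t + 1) le_rfl
    rw [Nat.cast_succ, ← add_assoc] at hlast ⊢
    exact ⟨p.concat (hc _), by simp [Walk.support_concat, hp, hlast.symm]⟩

theorem exists_walk_notMem_support_of_cycle [NeZero n] (hinj : Function.Injective c)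
    (hc : ∀ k, G.Adj (c k) (c (k + 1))) {v : V} {a b : ZMod n} (ha : c a ≠ v) (hb : c b ≠ v) :
    ∃ p : G.Walk (c a) (c b), v ∉ p.support := by
  by_cases hv : ∃ m, c m = v
  · obtain ⟨m, rfl⟩ := hv
    -- walk forwards from `c (m + 1)`; `c m` is only reached after going all the way round
    have hfrom : ∀ x, c x ≠ c m → ∃ p : G.Walk (c (m + 1)) (c x), c m ∉ p.support := by
      intro x hx
      set t := (x - (m + 1)).val
      have hxt : m + 1 + (t : ZMod n) = x := by rw [ZMod.natCast_zmod_val]; ring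
      obtain ⟨p, hp⟩ := exists_walk_add_natCast hc (m + 1) t fun s hs hsm => by
        have hsm' : m + 1 + (s : ZMod n) = m := hinj hsm
        have hdvd : n ∣ s + 1 := by
          rw [← ZMod.natCast_eq_zero_iff]
          push_cast
          linear_combination hsm'
        have hst : s = t := by
          have := Nat.le_of_dvd (by omega) hdvd
          have := ZMod.val_lt (x - (m + 1))
          omega
        exact hx (by rw [← hxt, ← hst, hsm'])
      exact ⟨p.copy rfl (congrArg c hxt), by simpa using hp⟩
    obtain ⟨pa, hpa⟩ := hfrom a ha
    obtain ⟨pb, hpb⟩ := hfrom b hb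
    exact ⟨pa.reverse.append pb, by simp [hpa, hpb]⟩
  · simp only [not_exists] at hv
    obtain ⟨p, hp⟩ := exists_walk_add_natCast hc a (b - a).val fun s _ => hv _
    exact ⟨p.copy rfl (by rw [ZMod.natCast_zmod_val, add_sub_cancel]), by simpa using hp⟩

end CyclicSequence

end SimpleGraph

section TwoConnected

variable {V : Type*} [Fintype V] {G : SimpleGraph V}

theorem TwoConnected.exists_ne_ne (hG : TwoConnected G) (x y : V) : ∃ z, z ≠ x ∧ z ≠ y :=
  Cardinal.exists_ne_ne_of_three_le (by rw [Cardinal.mk_fintype]; exact_mod_cast hG.1) x y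

theorem TwoConnected.exists_isPath_notMem (hG : TwoConnected G) {a b v : V} (ha : a ≠ v)
    (hb : b ≠ v) : ∃ p : G.Walk a b, p.IsPath ∧ v ∉ p.support := by
  classical
  obtain ⟨p, hp⟩ := (reachable_induce_ne_iff ha hb).mp ((hG.2 v).preconnected _ _)
  exact ⟨p.bypass, p.bypass_isPath, fun h => hp (p.support_bypass_subset_support h)⟩

theorem TwoConnected.exists_adj_ne (hG : TwoConnected G) {x y : V} (hyx : y ≠ x) :
    ∃ w, G.Adj y w ∧ w ≠ x := by
  obtain ⟨z, hzx, hzy⟩ := hG.exists_ne_ne x y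
  obtain ⟨p, -, hxp⟩ := hG.exists_isPath_notMem hyx hzx
  have hp : ¬ p.Nil := Walk.not_nil_of_ne hzy.symm
  exact ⟨p.snd, p.adj_snd hp, fun h => hxp (h ▸ p.getVert_mem_support 1)⟩

theorem TwoConnected.exists_isCycle_of_adj (hG : TwoConnected G) {x y : V} (hxy : G.Adj x y) :
    ∃ C : G.Walk y y, C.IsCycle ∧ x ∈ C.support := by
  obtain ⟨w, hyw, hwx⟩ := hG.exists_adj_ne hxy.ne'
  obtain ⟨P, hP, hyP⟩ := hG.exists_isPath_notMem hyw.ne' hxy.ne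
  refine ⟨_, Walk.isCycle_cons_append_reverse (Q := hxy.symm.toWalk) hP hxy.symm.isPath_toWalk
    hyw hwx hyP fun a ha haP => ?_, by simp⟩
  rcases (by simpa using ha : a = y ∨ a = x) with rfl | rfl
  · exact absurd haP hyP
  · rfl

/-- Whitney's step: reroute the cycle through `y`, along a path from `y` back to the cycle that
avoids `w`. -/
theorem TwoConnected.exists_isCycle_of_isCycle_of_adj (hG : TwoConnected G) {u x w y : V}
    {C : G.Walk u u} (hC : C.IsCycle) (hxC : x ∈ C.support) (hwC : w ∈ C.support) (hxw : x ≠ w)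
    (hwy : G.Adj w y) : ∃ (u' : V) (C' : G.Walk u' u'), C'.IsCycle ∧ x ∈ C'.support ∧
      y ∈ C'.support := by
  by_cases hyC : y ∈ C.support
  · exact ⟨u, C, hC, hxC, hyC⟩
  obtain ⟨P, -, hwP⟩ := hG.exists_isPath_notMem hwy.ne' hxw
  obtain ⟨x₀, hx₀, Q, hQ, hQP, hQC⟩ := P.exists_isPath_to_first_mem {a | a ∈ C.support} hxC
  have hx₀w : x₀ ≠ w := fun h => hwP (hQP (h ▸ Q.end_mem_support))
  obtain ⟨T, hT, hTC, hxT⟩ := hC.exists_isPath_mem_support hwC hx₀ hx₀w hxC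
  exact ⟨y, _, Walk.isCycle_cons_append_reverse hT hQ hwy.symm hx₀w.symm
    (fun h => hyC (hTC h)) (fun a haQ haT => hQC a haQ (hTC haT)), by simp [hxT], by simp⟩

theorem TwoConnected.exists_isCycle_mem_support (hG : TwoConnected G) {x y : V} (hxy : x ≠ y) :
    ∃ (u : V) (C : G.Walk u u), C.IsCycle ∧ x ∈ C.support ∧ y ∈ C.support := by
  obtain ⟨z, hzx, hzy⟩ := hG.exists_ne_ne x y
  obtain ⟨W, -, -⟩ := hG.exists_isPath_notMem hzy.symm hzx.symm
  clear hzx hzy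
  induction W with
  | nil => exact absurd rfl hxy
  | @cons y w x hyw W ih =>
    obtain rfl | hxw := eq_or_ne x w
    · obtain ⟨C, hC, hxC⟩ := hG.exists_isCycle_of_adj hyw.symm
      exact ⟨y, C, hC, hxC, C.start_mem_support⟩
    obtain ⟨u, C, hC, hxC, hwC⟩ := ih hxw
    exact hG.exists_isCycle_of_isCycle_of_adj hC hxC hwC hxw hyw.symm

theorem TwoConnected.deleteEdges_of_forall_exists_walk (hG : TwoConnected G) {x y : V}
    (h : ∀ v, x ≠ v → y ≠ v → ∃ p : (G.deleteEdges {s(x, y)}).Walk x y, v ∉ p.support) :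
    TwoConnected (G.deleteEdges {s(x, y)}) := by
  refine ⟨hG.1, fun v => (hG.2 v).of_adj_imp_reachable ?_⟩
  rintro ⟨a, ha⟩ ⟨b, hb⟩ hab
  rw [reachable_induce_ne_iff]
  by_cases he : s(a, b) = s(x, y)
  · rcases Sym2.eq_iff.mp he with ⟨rfl, rfl⟩ | ⟨rfl, rfl⟩
    · exact h v ha hb
    · obtain ⟨p, hp⟩ := h v hb ha
      exact ⟨p.reverse, by simpa using hp⟩
  · have hab' : (G.deleteEdges {s(x, y)}).Adj a b := by
      simpa [deleteEdges_adj, he] using hab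
    exact ⟨hab'.toWalk, by simp [Ne.symm ha, Ne.symm hb]⟩

theorem TwoConnected.deleteEdges_chord (hG : TwoConnected G) {n : ℕ} [NeZero n] {c : ZMod n → V}
    (hinj : Function.Injective c) (hc : ∀ k, G.Adj (c k) (c (k + 1))) {i j : ZMod n}
    (hji1 : j ≠ i + 1) (hij1 : i ≠ j + 1) : TwoConnected (G.deleteEdges {s(c i, c j)}) := by
  have hc' : ∀ k, (G.deleteEdges {s(c i, c j)}).Adj (c k) (c (k + 1)) := by
    intro k
    refine deleteEdges_adj.mpr ⟨hc k, fun he => ?_⟩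
    rcases Sym2.eq_iff.mp he with ⟨hki, hkj⟩ | ⟨hkj, hki⟩
    · exact hji1 (hinj hkj ▸ hinj hki ▸ rfl)
    · exact hij1 (hinj hki ▸ hinj hkj ▸ rfl)
  exact hG.deleteEdges_of_forall_exists_walk fun v hi hj =>
    exists_walk_notMem_support_of_cycle hinj hc' hi hj

end TwoConnected

section Chordless

variable {V : Type*} {G : SimpleGraph V}

theorem Chordless.isChordless_of_isCycle (hG : Chordless G) {u : V} {C : G.Walk u u}
    (hC : C.IsCycle) : C.IsChordless := by
  have hn := hC.three_le_length
  have : NeZero C.length := ⟨by omega⟩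
  set c : ZMod C.length → V := fun k => C.getVert k.val
  have hsucc : ∀ k, c (k + 1) = C.getVert (k.val + 1) := by
    intro k
    have : k + 1 = ((k.val + 1 : ℕ) : ZMod C.length) := by push_cast [ZMod.natCast_zmod_val]; rfl
    simp only [c, this, ZMod.val_natCast]
    exact C.getVert_mod_length k.val_lt
  have hedge : ∀ k, s(c k, c (k + 1)) ∈ C.edges := fun k =>
    hsucc k ▸ C.mk_mem_edges_iff_exists.mpr ⟨k.val, k.val_lt, rfl⟩
  have hinj : Function.Injective c := fun k l h =>
    ZMod.val_injective _ (hC.getVert_injOn' (show k.val ≤ C.length - 1 by have := k.val_lt; omega)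
      (show l.val ≤ C.length - 1 by have := l.val_lt; omega) h)
  have hsurj : ∀ a ∈ C.support, ∃ k, c k = a := by
    intro a ha
    obtain ⟨i, rfl, hi⟩ := Walk.mem_support_iff_exists_getVert.mp ha
    exact ⟨i, by simp only [c, ZMod.val_natCast]; exact C.getVert_mod_length hi⟩
  rw [Walk.isChordless_iff_forall_mem_edges]
  intro a b ha hb hab
  obtain ⟨i, rfl⟩ := hsurj a ha
  obtain ⟨j, rfl⟩ := hsurj b hb
  by_contra hne
  refine hG C.length hn c hinj (fun k => C.adj_of_mem_edges (hedge k)) i j ?_ ?_ ?_ hab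
  · rintro rfl
    exact hab.ne rfl
  · rintro rfl
    exact hne (hedge i)
  · rintro rfl
    exact hne (Sym2.eq_swap ▸ hedge j)

theorem Chordless.not_twoConnected_deleteEdges [Fintype V] (hG : Chordless G) {x y : V}
    (hxy : G.Adj x y) : ¬ TwoConnected (G.deleteEdges {s(x, y)}) := by
  intro hH
  obtain ⟨u, C, hC, hx, hy⟩ := hH.exists_isCycle_mem_support hxy.ne
  have hle := G.deleteEdges_le {s(x, y)}
  have hxyC := (hG.isChordless_of_isCycle ((Walk.isCycle_mapLe hle).mpr hC)).mem_edges
    (by simpa using hx) (by simpa using hy) hxy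
  have := C.edges_subset_edgeSet (by simpa [Walk.mapLe, Walk.edges_map] using hxyC)
  simp at this

end Chordless

/-- A 2-connected graph is minimally 2-connected iff it is chordless. -/
theorem stmt2 {V : Type*} [Fintype V] (G : SimpleGraph V) (h2 : TwoConnected G) :
    (∀ e ∈ G.edgeSet, ¬ TwoConnected (G.deleteEdges {e})) ↔ Chordless G := by
  refine ⟨fun hmin n hn c hinj hc i j _ hji1 hij1 hadj => ?_,
    fun hG e => Sym2.ind (fun _ _ => hG.not_twoConnected_deleteEdges) e⟩
  have : NeZero n := ⟨by omega⟩
  exact hmin _ hadj (h2.deleteEdges_chord hinj hc hji1 hij1)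
end

section
/- Let G be a simple graph with a proper edge coloring α using colors {1,...,t}, let u be a vertex, and let X_u(α,v) = (ux_0, ux_1, ..., ux_p) be an α-fan at u starting with ux_0 = uv such that the color m_α(x_p) missing at x_p is also missing at u (i.e., the fan is a 'path'). Then the coloring obtained by recoloring each edge ux_i with the color m_α(x_i) (the color missing at x_i) for i = 0,...,p, leaving all other edges unchanged, is a proper edge coloring of G. -/
open SimpleGraph

/-! A colour `m i` can only clash at `u`: at `x i` it is missing by definition. At `u`, properness
of `α` makes `u x_{i+1}` the only edge coloured `m i` (for `i < p`), and `m p` is missing at `u`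
altogether; since `u x_{i+1}` is itself recoloured, no clash remains. -/

namespace IsFan

variable {V : Type*} {G : SimpleGraph V} {t : ℕ} {α : Sym2 V → Fin t} {u : V} {p : ℕ}
  {x : ℕ → V} {m : ℕ → Fin t}

theorem edge_injective (hfan : IsFan G α u p x m) {i j : ℕ} (hi : i ≤ p) (hj : j ≤ p)
    (h : s(u, x i) = s(u, x j)) : i = j :=
  hfan.inj i hi j hj (Sym2.congr_right.mp h)

theorem edge_mem (hfan : IsFan G α u p x m) {i : ℕ} (hi : i ≤ p) : s(u, x i) ∈ G.edgeSet :=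
  hfan.adj i hi

theorem eq_succ_of_color_eq_missing (hα : IsProperEdgeColoring G α)
    (hfan : IsFan G α u p x m) (hpath : MissingAt G α (m p) u) {i : ℕ} (hi : i ≤ p)
    {e : Sym2 V} (he : e ∈ G.edgeSet) (hu : u ∈ e) (hc : α e = m i) :
    i < p ∧ e = s(u, x (i + 1)) := by
  have hip : i < p := hi.lt_of_ne fun hip => hpath e he hu (hip ▸ hc)
  refine ⟨hip, by_contra fun hne => ?_⟩
  exact hα e he _ (hfan.edge_mem hip) hne ⟨u, hu, Sym2.mem_mk_left _ _⟩
    (by rw [hc, hfan.succ i hip])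

theorem missing_injOn (hα : IsProperEdgeColoring G α) (hfan : IsFan G α u p x m)
    (hpath : MissingAt G α (m p) u) {i j : ℕ} (hi : i ≤ p) (hj : j ≤ p) (h : m i = m j) :
    i = j := by
  have of_lt : ∀ {i j}, i < p → j ≤ p → m i = m j → i = j := fun {i j} hip hj h => by
    obtain ⟨hjp, heq⟩ := hfan.eq_succ_of_color_eq_missing hα hpath hj (hfan.edge_mem hip)
      (Sym2.mem_mk_left _ _) (by rw [hfan.succ i hip, h])
    exact Nat.succ_injective (hfan.edge_injective hip hjp heq)
  rcases hi.lt_or_eq with hip | rfl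
  · exact of_lt hip hj h
  rcases hj.lt_or_eq with hjp | rfl
  · exact (of_lt hjp le_rfl h.symm).symm
  · rfl

theorem color_ne_missing_of_not_mem (hα : IsProperEdgeColoring G α)
    (hfan : IsFan G α u p x m) (hpath : MissingAt G α (m p) u) {i : ℕ} (hi : i ≤ p)
    {e : Sym2 V} (he : e ∈ G.edgeSet) (hnot : ∀ j ≤ p, e ≠ s(u, x j)) {v : V}
    (hv : v ∈ s(u, x i)) (hve : v ∈ e) : α e ≠ m i := by
  intro hc
  rcases Sym2.mem_iff.mp hv with rfl | rfl
  · obtain ⟨hip, rfl⟩ := hfan.eq_succ_of_color_eq_missing hα hpath hi he hve hc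
    exact hnot (i + 1) hip rfl
  · exact hfan.missing i hi e he hve hc

end IsFan

/-- If the fan `X_u(α,v)` is a path (the color missing at `xₚ` is also missing at `u`),
then the recoloring `X_u^{-1}(α,v)` is a proper edge coloring. -/
theorem stmt4 {V : Type*} (G : SimpleGraph V) {t : ℕ} (α : Sym2 V → Fin t)
    (hα : IsProperEdgeColoring G α) (u : V) (p : ℕ) (x : ℕ → V) (m : ℕ → Fin t)
    (hfan : IsFan G α u p x m) (hpath : MissingAt G α (m p) u)
    (β : Sym2 V → Fin t) (hβ : IsFanRecolor α u p x m β) :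
    IsProperEdgeColoring G β := by
  obtain ⟨hβfan, hβrest⟩ := hβ
  intro e₁ he₁ e₂ he₂ hne ⟨v, hv₁, hv₂⟩
  by_cases h₁ : ∃ i ≤ p, e₁ = s(u, x i) <;> by_cases h₂ : ∃ j ≤ p, e₂ = s(u, x j)
  · obtain ⟨i, hi, rfl⟩ := h₁
    obtain ⟨j, hj, rfl⟩ := h₂
    rw [hβfan i hi, hβfan j hj]
    exact fun h => hne (by rw [hfan.missing_injOn hα hpath hi hj h])
  · obtain ⟨i, hi, rfl⟩ := h₁
    push Not at h₂
    rw [hβfan i hi, hβrest e₂ h₂]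
    exact (hfan.color_ne_missing_of_not_mem hα hpath hi he₂ h₂ hv₁ hv₂).symm
  · obtain ⟨j, hj, rfl⟩ := h₂
    push Not at h₁
    rw [hβfan j hj, hβrest e₁ h₁]
    exact hfan.color_ne_missing_of_not_mem hα hpath hj he₁ h₁ hv₂ hv₁
  · push Not at h₁ h₂
    rw [hβrest e₁ h₁, hβrest e₂ h₂]
    exact hα e₁ he₁ e₂ he₂ hne ⟨v, hv₁, hv₂⟩
end

section
/- Let G be a simple graph with proper edge coloring α, and suppose every proper coloring Kempe-equivalent to α has color class of color 1 different from a fixed matching M. In a minimal such coloring α (minimizing the number of bad edges, then ugly edges, among colorings Kempe-equivalent to a fixed coloring β), every bad edge is adjacent to an ugly edge, where an edge is bad if it belongs to M but is not colored 1, and ugly if it is colored 1 but does not belong to M. -/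
open SimpleGraph

/- Recoloring a bad edge `uv` with a color `c` missing at both `u` and `v` is a Kempe change:
the `(α uv, c)`-component through `uv` is the single edge `uv`, since neither endpoint carries
another edge of color `α uv` (properness) or of color `c`. This lowers the number of bad edges,
against minimality; so `c` is present at `u` or `v`, on an edge outside `M` because `M` is a
matching. -/

lemma SimpleGraph.Reachable.mem_of_forall_adj_mem {V : Type*} {H : SimpleGraph V} {S : Set V}
    (hS : ∀ x ∈ S, ∀ y, H.Adj x y → y ∈ S) {u w : V} (h : H.Reachable u w) (hu : u ∈ S) :
    w ∈ S := by
  obtain ⟨p⟩ := h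
  induction p with
  | nil => exact hu
  | cons hxy _ ih => exact ih (hS _ hu _ hxy)

section KempeRecoloring

variable {V : Type*} {t : ℕ} {G : SimpleGraph V} {α : Sym2 V → Fin t} {c : Fin t} {u v : V}

lemma MissingAt.ne_of_mem_of_mem (hu : MissingAt G α c u) (hv : MissingAt G α c v)
    {f : Sym2 V} (hf : f ∈ G.edgeSet) {w : V} (hwf : w ∈ f) (hw : w ∈ s(u, v)) : α f ≠ c := by
  rcases Sym2.mem_iff.1 hw with rfl | rfl
  exacts [hu f hf hwf, hv f hf hwf]

variable [DecidableEq V]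

lemma IsProperEdgeColoring.update (hα : IsProperEdgeColoring G α) (hu : MissingAt G α c u)
    (hv : MissingAt G α c v) : IsProperEdgeColoring G (Function.update α s(u, v) c) := by
  intro e₁ he₁ e₂ he₂ hne ⟨w, hw₁, hw₂⟩
  by_cases h₁ : e₁ = s(u, v)
  · subst h₁
    rw [Function.update_self, Function.update_of_ne hne.symm]
    exact (hu.ne_of_mem_of_mem hv he₂ hw₂ hw₁).symm
  by_cases h₂ : e₂ = s(u, v)
  · subst h₂
    rw [Function.update_self, Function.update_of_ne hne]
    exact hu.ne_of_mem_of_mem hv he₁ hw₁ hw₂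
  rw [Function.update_of_ne h₁, Function.update_of_ne h₂]
  exact hα e₁ he₁ e₂ he₂ hne ⟨w, hw₁, hw₂⟩

lemma eq_of_mem_of_color_eq (hα : IsProperEdgeColoring G α) (huv : G.Adj u v)
    (hu : MissingAt G α c u) (hv : MissingAt G α c v) {f : Sym2 V} (hf : f ∈ G.edgeSet)
    {w : V} (hwf : w ∈ f) (hw : w ∈ s(u, v)) (hcol : α f = α s(u, v) ∨ α f = c) :
    f = s(u, v) := by
  by_contra hne
  rcases hcol with hcol | hcol
  exacts [hα f hf _ huv hne ⟨w, hwf, hw⟩ hcol, hu.ne_of_mem_of_mem hv hf hwf hw hcol]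

lemma mem_of_bicolored_connectedComponentMk_eq (hα : IsProperEdgeColoring G α)
    (huv : G.Adj u v) (hu : MissingAt G α c u) (hv : MissingAt G α c v) {w : V}
    (hw : (bicolored G α (α s(u, v)) c).connectedComponentMk w =
      (bicolored G α (α s(u, v)) c).connectedComponentMk u) : w ∈ s(u, v) := by
  refine (ConnectedComponent.exact hw).symm.mem_of_forall_adj_mem ?_ (Sym2.mem_mk_left u v)
  intro x hx y hxy
  simp only [bicolored, fromEdgeSet_adj, Set.mem_ofPred_eq] at hxy
  rw [← eq_of_mem_of_color_eq hα huv hu hv hxy.1.1 (Sym2.mem_mk_left x y) hx hxy.1.2]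
  exact Sym2.mem_mk_right x y

lemma isKempeSwap_update (hα : IsProperEdgeColoring G α) (huv : G.Adj u v)
    (hu : MissingAt G α c u) (hv : MissingAt G α c v) :
    IsKempeSwap G α (Function.update α s(u, v) c) := by
  set H := bicolored G α (α s(u, v)) c
  refine ⟨α s(u, v), c, H.connectedComponentMk u, ?_, ?_⟩
  · intro f hf hcol hcomp
    have hw : f.out.1 ∈ s(u, v) :=
      mem_of_bicolored_connectedComponentMk_eq hα huv hu hv (hcomp _ (Sym2.out_fst_mem f))
    obtain rfl := eq_of_mem_of_color_eq hα huv hu hv hf (Sym2.out_fst_mem f) hw hcol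
    exact Or.inl ⟨rfl, Function.update_self ..⟩
  · intro f hf
    by_cases hfe : f = s(u, v)
    · subst hfe
      have hv' : H.connectedComponentMk v = H.connectedComponentMk u := by
        have hadj : H.Adj u v := (fromEdgeSet_adj _).2 ⟨⟨huv, Or.inl rfl⟩, huv.ne⟩
        exact ConnectedComponent.eq.2 hadj.reachable.symm
      exfalso
      rcases hf with hf | hf | ⟨w, hw, hwC⟩
      · exact hf huv
      · exact hf.1 rfl
      · rcases Sym2.mem_iff.1 hw with rfl | rfl
        exacts [hwC rfl, hwC hv']
    · exact Function.update_of_ne hfe _ _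

end KempeRecoloring

lemma ncard_update_ne_lt {ι κ : Type*} [DecidableEq ι] {M : Set ι} (hM : M.Finite)
    (γ : ι → κ) {e : ι} (he : e ∈ M) {c : κ} (hc : γ e ≠ c) :
    {f | f ∈ M ∧ Function.update γ e c f ≠ c}.ncard < {f | f ∈ M ∧ γ f ≠ c}.ncard := by
  have : {f | f ∈ M ∧ Function.update γ e c f ≠ c} = {f | f ∈ M ∧ γ f ≠ c} \ {e} := by
    ext f
    by_cases hf : f = e
    · subst hf; simp
    · simp [hf]
  rw [this]
  exact Set.ncard_sdiff_singleton_lt_of_mem ⟨he, hc⟩ (hM.subset fun f hf => hf.1)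

theorem stmt13_general {V : Type*} [Fintype V] (G : SimpleGraph V) {t : ℕ} (c1 : Fin t)
    (M : Set (Sym2 V)) (hMsub : M ⊆ G.edgeSet)
    (hmatch : ∀ e ∈ M, ∀ f ∈ M, e ≠ f → ∀ v : V, ¬(v ∈ e ∧ v ∈ f))
    (β : Sym2 V → Fin t)
    (α : Sym2 V → Fin t) (hα : IsProperEdgeColoring G α) (hKα : KempeEquiv G β α)
    (hminbad : ∀ α' : Sym2 V → Fin t, IsProperEdgeColoring G α' → KempeEquiv G β α' →
      {e | e ∈ M ∧ α e ≠ c1}.ncard ≤ {e | e ∈ M ∧ α' e ≠ c1}.ncard) :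
    ∀ e ∈ M, α e ≠ c1 →
      ∃ f ∈ G.edgeSet, f ∉ M ∧ α f = c1 ∧ f ≠ e ∧ ∃ v : V, v ∈ e ∧ v ∈ f := by
  classical
  intro e heM hbad
  by_contra! hnoUgly
  induction e using Sym2.ind with | _ u v => ?_
  have huv : G.Adj u v := hMsub heM
  have hmissing : ∀ w ∈ s(u, v), MissingAt G α c1 w := by
    intro w hw f hf hwf hfc
    by_cases hfe : f = s(u, v)
    · exact hbad (hfe ▸ hfc)
    by_cases hfM : f ∈ M
    · exact hmatch _ heM f hfM (Ne.symm hfe) w ⟨hw, hwf⟩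
    · exact hnoUgly f hf hfM hfc hfe w hw hwf
  have hu := hmissing u (Sym2.mem_mk_left u v)
  have hv := hmissing v (Sym2.mem_mk_right u v)
  exact (hminbad _ (hα.update hu hv) (hKα.tail (isKempeSwap_update hα huv hu hv))).not_gt
    (ncard_update_ne_lt (Set.toFinite M) α heM hbad)

/-- Property 3.2: in a minimal coloring (minimizing bad edges, then ugly edges, over the
Kempe-equivalence class of `β`), assuming no coloring in that class has color class of
color `c1` equal to the matching `M`, every bad edge is adjacent to an ugly edge. -/
theorem stmt13 {V : Type*} [Fintype V] (G : SimpleGraph V) {t : ℕ} (c1 : Fin t)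
    (M : Set (Sym2 V)) (hMsub : M ⊆ G.edgeSet)
    (hmatch : ∀ e ∈ M, ∀ f ∈ M, e ≠ f → ∀ v : V, ¬(v ∈ e ∧ v ∈ f))
    (β : Sym2 V → Fin t) (hβ : IsProperEdgeColoring G β)
    (hnever : ∀ α' : Sym2 V → Fin t, IsProperEdgeColoring G α' → KempeEquiv G β α' →
      {e | e ∈ G.edgeSet ∧ α' e = c1} ≠ M)
    (α : Sym2 V → Fin t) (hα : IsProperEdgeColoring G α) (hKα : KempeEquiv G β α)
    (hminbad : ∀ α' : Sym2 V → Fin t, IsProperEdgeColoring G α' → KempeEquiv G β α' →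
      {e | e ∈ M ∧ α e ≠ c1}.ncard ≤ {e | e ∈ M ∧ α' e ≠ c1}.ncard)
    (hminugly : ∀ α' : Sym2 V → Fin t, IsProperEdgeColoring G α' → KempeEquiv G β α' →
      {e | e ∈ M ∧ α' e ≠ c1}.ncard = {e | e ∈ M ∧ α e ≠ c1}.ncard →
      {e | e ∈ G.edgeSet ∧ e ∉ M ∧ α e = c1}.ncard ≤
        {e | e ∈ G.edgeSet ∧ e ∉ M ∧ α' e = c1}.ncard) :
    ∀ e ∈ M, α e ≠ c1 →
      ∃ f ∈ G.edgeSet, f ∉ M ∧ α f = c1 ∧ f ≠ e ∧ ∃ v : V, v ∈ e ∧ v ∈ f :=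
  stmt13_general G c1 M hMsub hmatch β α hα hKα hminbad
end
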